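/- ∏_{n≥0} [((8n+1)(8n+7)) / ((8n+3)(8n+5))]^{(-1)^{t_n}} = 1/2. -/

import Mathlib

open Filter Finset Topology

/-- The Thue–Morse sequence: sum modulo 2 of the binary digits of `n`. -/
def tm (n : ℕ) : ℕ := (Nat.digits 2 n).sum % 2

/-!
Write `ε n = (-1) ^ tm n`, so that `ε (2n) = ε n` and `ε (2n+1) = -ε n`. Since `ratio4 n` and
`ratio2 n` are `1 + O(n⁻²)`, the series `α = ∑ ε n log (ratio4 n)` and `β = ∑ ε n log (ratio2 n)`
converge absolutely. Grouping the terms of `β` in pairs `(2n, 2n+1)` and using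
`ratio2 (2x) / ratio2 (2x+1) = ratio2 x / (ratio4 x)²` gives `β = β - 2α - log 2` (the `log 2`
comes from `n = 0`), so `α = -log 2 / 2`. Grouping the terms of `α` in the same way and using
`ratio8 x = ratio4 (2x) / ratio4 (2x+1) * ratio4 x` shows that the logarithm of the product
is `2α = -log 2`.
-/

open Real

noncomputable section

def tmSign (n : ℕ) : ℝ := (-1) ^ tm n

lemma tmSign_eq (n : ℕ) : tmSign n = (-1) ^ (Nat.digits 2 n).sum := by
  rw [tmSign, tm, ← neg_one_pow_eq_pow_mod_two]

lemma tmSign_two_mul (n : ℕ) : tmSign (2 * n) = tmSign n := by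
  rcases Nat.eq_zero_or_pos n with rfl | hn
  · rfl
  · rw [tmSign_eq, tmSign_eq, Nat.digits_def' one_lt_two (by omega)]
    simp

lemma tmSign_two_mul_add_one (n : ℕ) : tmSign (2 * n + 1) = -tmSign n := by
  rw [tmSign_eq, tmSign_eq, Nat.digits_def' one_lt_two (by omega),
    show (2 * n + 1) % 2 = 1 by omega, show (2 * n + 1) / 2 = n by omega]
  simp only [List.sum_cons, pow_add, pow_one, neg_one_mul]

lemma abs_tmSign (n : ℕ) : |tmSign n| = 1 := by
  simp [tmSign]

lemma Summable.tmSign_mul {f : ℕ → ℝ} (hf : Summable f) :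
    Summable fun n => tmSign n * f n :=
  hf.norm.of_norm_bounded fun n => by simp [abs_tmSign]

lemma HasSum.pair_add {G : Type*} [AddCommGroup G] [UniformSpace G] [IsUniformAddGroup G]
    [CompleteSpace G] [T2Space G] {f : ℕ → G} {s : G} (hf : HasSum f s) :
    HasSum (fun n => f (2 * n) + f (2 * n + 1)) s := by
  have he := (hf.summable.comp_injective (mul_right_injective₀ two_ne_zero)).hasSum
  have ho := (hf.summable.comp_injective
    ((add_left_injective 1).comp (mul_right_injective₀ two_ne_zero))).hasSum
  have h := he.add ho
  rwa [← hf.unique (he.even_add_odd ho)] at h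

lemma summable_of_norm_le_inv_sq {E : Type*} [NormedAddCommGroup E] [CompleteSpace E]
    {f : ℕ → E} (hf : ∀ n, ‖f n‖ ≤ 1 / ((n : ℝ) + 1) ^ 2) :
    Summable f := by
  have h : Summable fun n : ℕ => 1 / ((n : ℝ) + 1) ^ 2 := by
    simpa using (summable_nat_add_iff 1).mpr (summable_one_div_nat_pow.mpr one_lt_two)
  exact h.of_norm_bounded hf

lemma summable_log_of_summable_sub_one {ι : Type*} {f : ι → ℝ}
    (hf : Summable fun i => f i - 1) : Summable fun i => log (f i) := by
  simpa using summable_log_one_add_of_summable hf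

lemma zpow_neg_one_pow_eq_exp {x : ℝ} (hx : 0 < x) (k : ℕ) :
    x ^ ((-1 : ℤ) ^ k) = exp ((-1) ^ k * log x) := by
  rw [← rpow_intCast, rpow_def_of_pos hx, mul_comm]
  push_cast
  rfl

def ratio8 (x : ℝ) : ℝ := ((8 * x + 1) * (8 * x + 7)) / ((8 * x + 3) * (8 * x + 5))

def ratio4 (x : ℝ) : ℝ := ((4 * x + 1) * (4 * x + 4)) / ((4 * x + 2) * (4 * x + 3))

def ratio2 (x : ℝ) : ℝ := (2 * x * (2 * x + 2)) / (2 * x + 1) ^ 2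

lemma ratio8_pos {x : ℝ} (hx : 0 ≤ x) : 0 < ratio8 x := by
  unfold ratio8; positivity

lemma ratio4_pos {x : ℝ} (hx : 0 ≤ x) : 0 < ratio4 x := by
  unfold ratio4; positivity

lemma ratio2_pos {x : ℝ} (hx : 0 < x) : 0 < ratio2 x := by
  unfold ratio2; positivity

lemma ratio8_eq {x : ℝ} (hx : 0 ≤ x) :
    ratio8 x = ratio4 (2 * x) / ratio4 (2 * x + 1) * ratio4 x := by
  unfold ratio8 ratio4
  field_simp
  ring

lemma ratio2_two_mul_div {x : ℝ} (hx : 0 < x) :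
    ratio2 (2 * x) / ratio2 (2 * x + 1) = ratio2 x / ratio4 x ^ 2 := by
  unfold ratio2 ratio4
  field_simp
  ring

lemma abs_ratio4_sub_one_le {x : ℝ} (hx : 0 ≤ x) : |ratio4 x - 1| ≤ 1 / (x + 1) ^ 2 := by
  have h : ratio4 x - 1 = -(2 / ((4 * x + 2) * (4 * x + 3))) := by
    unfold ratio4; field_simp; ring
  rw [h, abs_neg, abs_of_pos (by positivity), div_le_div_iff₀ (by positivity) (by positivity)]
  nlinarith

lemma abs_ratio2_sub_one_le {x : ℝ} (hx : 0 ≤ x) : |ratio2 x - 1| ≤ 1 / (x + 1) ^ 2 := by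
  have h : ratio2 x - 1 = -(1 / (2 * x + 1) ^ 2) := by
    unfold ratio2; field_simp; ring
  rw [h, abs_neg, abs_of_pos (by positivity), div_le_div_iff₀ (by positivity) (by positivity)]
  nlinarith

def signedLogRatio4 (n : ℕ) : ℝ := tmSign n * log (ratio4 n)

def signedLogRatio2 (n : ℕ) : ℝ := tmSign n * log (ratio2 n)

lemma summable_signedLogRatio4 : Summable signedLogRatio4 :=
  (summable_log_of_summable_sub_one <| summable_of_norm_le_inv_sq fun n =>
    abs_ratio4_sub_one_le n.cast_nonneg).tmSign_mul

lemma summable_signedLogRatio2 : Summable signedLogRatio2 :=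
  (summable_log_of_summable_sub_one <| summable_of_norm_le_inv_sq fun n =>
    abs_ratio2_sub_one_le n.cast_nonneg).tmSign_mul

lemma tmSign_mul_log_ratio8 (n : ℕ) :
    tmSign n * log (ratio8 n) =
      signedLogRatio4 (2 * n) + signedLogRatio4 (2 * n + 1) + signedLogRatio4 n := by
  have hx : (0 : ℝ) ≤ n := n.cast_nonneg
  have h₀ : 0 < ratio4 (2 * n) := ratio4_pos (by positivity)
  have h₁ : 0 < ratio4 (2 * n + 1) := ratio4_pos (by positivity)
  rw [ratio8_eq hx, log_mul (div_pos h₀ h₁).ne' (ratio4_pos hx).ne', log_div h₀.ne' h₁.ne']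
  simp only [signedLogRatio4, tmSign_two_mul, tmSign_two_mul_add_one]
  push_cast
  ring

lemma signedLogRatio2_even_add_odd (n : ℕ) :
    signedLogRatio2 (2 * n) + signedLogRatio2 (2 * n + 1) =
      signedLogRatio2 n - 2 * signedLogRatio4 n - if n = 0 then log 2 else 0 := by
  rcases Nat.eq_zero_or_pos n with rfl | hn
  · have h1 : ratio2 1 = ratio4 0 ^ 2 * 2 := by norm_num [ratio2, ratio4]
    have h0 : tmSign 0 = 1 := by simp [tmSign, tm]
    simp only [signedLogRatio4, signedLogRatio2, mul_zero, zero_add, tmSign_two_mul_add_one 0, h0,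
      if_pos, Nat.cast_zero, Nat.cast_one]
    rw [h1, log_mul (pow_pos (ratio4_pos le_rfl) 2).ne' two_ne_zero, log_pow]
    ring
  · have hx : (0 : ℝ) < n := by exact_mod_cast hn
    have key := congrArg log (ratio2_two_mul_div hx)
    rw [log_div (ratio2_pos (by positivity)).ne' (ratio2_pos (by positivity)).ne',
      log_div (ratio2_pos hx).ne' (pow_pos (ratio4_pos hx.le) 2).ne', log_pow] at key
    simp only [signedLogRatio4, signedLogRatio2, tmSign_two_mul, tmSign_two_mul_add_one,
      if_neg hn.ne']
    push_cast
    linear_combination tmSign n * key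

lemma hasSum_signedLogRatio4 : HasSum signedLogRatio4 (-log 2 / 2) := by
  have hA := summable_signedLogRatio4.hasSum
  have hB := summable_signedLogRatio2.hasSum
  have hpairs := hB.pair_add
  simp only [signedLogRatio2_even_add_odd] at hpairs
  have hsum : ∑' n, signedLogRatio4 n = -log 2 / 2 := by
    linarith [hpairs.unique ((hB.sub (hA.mul_left 2)).sub (hasSum_ite_eq 0 (log 2)))]
  rwa [hsum] at hA

lemma hasSum_tmSign_mul_log_ratio8 : HasSum (fun n => tmSign n * log (ratio8 n)) (-log 2) := by
  have h := hasSum_signedLogRatio4.pair_add.add hasSum_signedLogRatio4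
  rwa [← funext tmSign_mul_log_ratio8, add_halves] at h

end

theorem prod_l :
    Tendsto (fun N => ∏ n ∈ Finset.range N,
        ((((8 * (n : ℝ) + 1) * (8 * (n : ℝ) + 7)) / ((8 * (n : ℝ) + 3) * (8 * (n : ℝ) + 5)))) ^ ((-1 : ℤ) ^ tm n))
      atTop (𝓝 ((1 / 2 : ℝ))) := by
  have h := (continuous_exp.tendsto _).comp hasSum_tmSign_mul_log_ratio8.tendsto_sum_nat
  rw [exp_neg, exp_log two_pos, ← one_div] at h
  refine h.congr fun N => ?_
  rw [Function.comp_apply, exp_sum]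
  refine prod_congr rfl fun n _ => ?_
  rw [tmSign, ← zpow_neg_one_pow_eq_exp (ratio8_pos n.cast_nonneg), ratio8]
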